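/- arXiv:1704.02237 — 2 statements merged into one kernel-verified Lean document; each statement's English description precedes it below -/
import Mathlib

section
/- For every finite simple graph F with chromatic number χ(F) ≥ 2, there exists a finite simple graph H that has the (χ(F)−1)-extension property and contains no induced copy of F. (Equivalently, the extension index of F is at least χ(F).) -/
/-- A graph `G` has the `k`-extension property if for every two disjoint finite sets
`X`, `Y` of vertices with `|X ∪ Y| < k` there is a vertex `z ∉ X ∪ Y` adjacent to
every vertex of `X` and to no vertex of `Y`. -/
def HasExtensionProperty {V : Type} (G : SimpleGraph V) (k : ℕ) : Prop :=
  ∀ X Y : Finset V, Disjoint X Y → X.card + Y.card < k →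
    ∃ z : V, z ∉ X ∧ z ∉ Y ∧ (∀ x ∈ X, G.Adj z x) ∧ (∀ y ∈ Y, ¬ G.Adj z y)

/-!
A graph containing an induced copy of `F` has chromatic number at least `χ(F)`, so it suffices
to find, for `k = χ(F) - 1`, a `k`-partite graph with the `k`-extension property. Take `k` parts
of size `m` and decide every edge between distinct parts by a fair coin. For disjoint `X`, `Y`
with `|X ∪ Y| = q < k`, some part avoids `X ∪ Y`; each of its `m` vertices is a witness for
`(X, Y)` independently with probability `2^(-q)`, so `(X, Y)` has no witness with probability at
most `(1 - 2^(1-k))^m`. There are only polynomially many pairs `(X, Y)` in `m`, so for large `m`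
the union bound leaves a graph in which every pair has a witness. Probabilities are counts of
labellings `Sym2 V → Bool`.
-/

open Finset Fintype SimpleGraph

theorem card_filter_forall_ne_mul_le {I U J : Type*} [Fintype I] [Fintype U] [Fintype J]
    [DecidableEq J] {φ : I × U → J} (hφ : Function.Injective φ) (g : U → Bool) :
    #{ω : J → Bool | ∀ t, (fun u => ω (φ (t, u))) ≠ g} * 2 ^ (card I * card U) ≤
      (2 ^ card U - 1) ^ card I * 2 ^ card J := by
  classical
  set R := Set.range φ
  have hJ : card J = card I * card U + card ↥Rᶜ := by
    rw [← Fintype.card_congr (Equiv.Set.sumCompl R), card_sum, Set.card_range_of_injective hφ,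
      card_prod]
  have hne : card {ν : U → Bool // ν ≠ g} = 2 ^ card U - 1 := by
    rw [card_subtype_compl, card_fun, card_bool, card_subtype_eq]
  have hinj : Function.Injective
      fun ω : {ω : J → Bool // ∀ t, (fun u => ω (φ (t, u))) ≠ g} =>
      ((fun t => ⟨fun u => ω.1 (φ (t, u)), ω.2 t⟩ : I → {ν : U → Bool // ν ≠ g}),
        fun j : ↥Rᶜ => ω.1 j) := by
    intro ω ω' h
    simp only [Prod.mk.injEq, funext_iff, Subtype.ext_iff] at h
    refine Subtype.ext (funext fun j => ?_)
    by_cases hj : j ∈ R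
    · obtain ⟨⟨t, u⟩, rfl⟩ := hj
      exact h.1 t u
    · exact h.2 ⟨j, hj⟩
  have hcard := card_le_of_injective _ hinj
  rw [card_prod, card_fun, hne, card_fun, card_bool, Fintype.card_subtype] at hcard
  calc _ ≤ (2 ^ card U - 1) ^ card I * 2 ^ card ↥Rᶜ * 2 ^ (card I * card U) :=
        Nat.mul_le_mul_right _ hcard
    _ = (2 ^ card U - 1) ^ card I * 2 ^ card J := by rw [hJ, pow_add]; ring

theorem card_filter_forall_ne_le {I U J : Type*} [Fintype I] [Fintype U] [Fintype J]
    [DecidableEq J] {φ : I × U → J} (hφ : Function.Injective φ) (g : U → Bool) :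
    (#{ω : J → Bool | ∀ t, (fun u => ω (φ (t, u))) ≠ g} : ℝ) ≤
      2 ^ card J * (1 - 2⁻¹ ^ card U) ^ card I := by
  have h := card_filter_forall_ne_mul_le hφ g
  have hU : ((2 ^ card U - 1 : ℕ) : ℝ) = 2 ^ card U * (1 - 2⁻¹ ^ card U) := by
    rw [Nat.cast_sub Nat.one_le_two_pow, mul_sub, ← mul_pow]
    norm_num
  have hpos : (0 : ℝ) < 2 ^ (card I * card U) := by positivity
  rw [← mul_le_mul_iff_left₀ hpos]
  calc _ ≤ (((2 ^ card U - 1) ^ card I * 2 ^ card J : ℕ) : ℝ) := by exact_mod_cast h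
    _ = _ := by push_cast [hU]; rw [mul_pow, ← pow_mul]; ring

theorem card_filter_card_lt_le {α : Type*} [Fintype α] [Nonempty α] (k : ℕ) :
    #{s : Finset α | #s < k} ≤ k * card α ^ (k - 1) := by
  classical
  have hsub : ({s : Finset α | #s < k} : Finset _) ⊆ (range k).biUnion (powersetCard · univ) :=
    fun s hs => mem_biUnion.2 ⟨#s, mem_range.2 (mem_filter.1 hs).2, mem_powersetCard_univ.2 rfl⟩
  calc _ ≤ ∑ r ∈ range k, #(powersetCard r (univ : Finset α)) :=
        (card_le_card hsub).trans card_biUnion_le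
    _ ≤ ∑ _r ∈ range k, card α ^ (k - 1) := sum_le_sum fun r hr => by
        rw [card_powersetCard, card_univ]
        exact (Nat.choose_le_pow _ _).trans
          (Nat.pow_le_pow_right card_pos (Nat.le_sub_one_of_lt (mem_range.1 hr)))
    _ = k * card α ^ (k - 1) := by rw [sum_const, card_range, smul_eq_mul]

theorem exists_mul_pow_mul_pow_lt_one (C : ℝ) (p : ℕ) {r : ℝ} (hr₀ : 0 ≤ r)
    (hr₁ : r < 1) :
    ∃ m : ℕ, 0 < m ∧ C * m ^ p * r ^ m < 1 := by
  have hlim :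
      Filter.Tendsto (fun m : ℕ => C * ((m : ℝ) ^ p * r ^ m)) Filter.atTop (nhds 0) := by
    simpa using (tendsto_pow_const_mul_const_pow_of_lt_one p hr₀ hr₁).const_mul C
  obtain ⟨m, hlt, hpos⟩ :=
    ((hlim.eventually (gt_mem_nhds one_pos)).and (Filter.eventually_gt_atTop 0)).exists
  exact ⟨m, hpos, by rwa [mul_assoc]⟩

theorem exists_forall_notMem_of_sum_card_lt {ι β : Type*} [Fintype β] (P : Finset ι)
    (B : ι → Finset β) (h : ∑ p ∈ P, #(B p) < card β) : ∃ b, ∀ p ∈ P, b ∉ B p := by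
  classical
  obtain ⟨b, -, hb⟩ := exists_mem_notMem_of_card_lt_card (s := P.biUnion B) (t := univ)
    (card_biUnion_le.trans_lt (by rwa [card_univ]))
  exact ⟨b, fun p hp hbp => hb (mem_biUnion.2 ⟨p, hp, hbp⟩)⟩

def IsExtensionWitness {V : Type*} (G : SimpleGraph V) (X Y : Finset V) (z : V) : Prop :=
  z ∉ X ∧ z ∉ Y ∧ (∀ x ∈ X, G.Adj z x) ∧ ∀ y ∈ Y, ¬G.Adj z y

theorem HasExtensionProperty.of_iso {V W : Type} {G : SimpleGraph V} {G' : SimpleGraph W}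
    (e : G ≃g G') {k : ℕ} (h : HasExtensionProperty G k) : HasExtensionProperty G' k := by
  intro X Y hXY hcard
  let f : W ↪ V := e.symm.toEquiv.toEmbedding
  obtain ⟨z, hzX, hzY, hX, hY⟩ := h (X.map f) (Y.map f) ((disjoint_map f).2 hXY)
    (by simpa using hcard)
  have hadj : ∀ w, G.Adj z (f w) ↔ G'.Adj (e z) w := fun w => by
    simpa [f] using (e.map_adj_iff (v := z) (w := e.symm w)).symm
  refine ⟨e z, fun hz => hzX ?_, fun hz => hzY ?_, fun x hx => ?_, fun y hy hzy => ?_⟩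
  · simpa [f] using mem_map_of_mem f hz
  · simpa [f] using mem_map_of_mem f hz
  · exact (hadj x).1 (hX _ (mem_map_of_mem f hx))
  · exact hY _ (mem_map_of_mem f hy) ((hadj y).2 hzy)

def partiteGraph {ι α : Type*} (ω : Sym2 (ι × α) → Bool) : SimpleGraph (ι × α) where
  Adj a b := a.1 ≠ b.1 ∧ ω s(a, b)
  symm := ⟨fun _ _ h => ⟨h.1.symm, Sym2.eq_swap ▸ h.2⟩⟩
  loopless := ⟨fun _ h => h.1 rfl⟩

def partiteGraph.coloring {ι α : Type*} (ω : Sym2 (ι × α) → Bool) :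
    (partiteGraph ω).Coloring ι :=
  Coloring.mk Prod.fst fun h => h.1

open Classical in
theorem card_filter_forall_not_isExtensionWitness_le {ι α : Type} [Fintype ι] [Fintype α]
    [DecidableEq ι] [DecidableEq α] {S T : Finset (ι × α)} (hST : Disjoint S T)
    (hcard : #S + #T < card ι) :
    (#{ω : Sym2 (ι × α) → Bool | ∀ z, ¬IsExtensionWitness (partiteGraph ω) S T z} :
      ℝ) ≤ 2 ^ card (Sym2 (ι × α)) * (1 - 2⁻¹ ^ (#S + #T)) ^ card α := by
  set U := S ∪ T
  have hU : #U = #S + #T := card_union_of_disjoint hST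
  obtain ⟨i, -, hi⟩ : ∃ i ∈ (univ : Finset ι), i ∉ U.image Prod.fst :=
    exists_mem_notMem_of_card_lt_card (card_image_le.trans_lt (by rwa [card_univ, hU]))
  have hiU : ∀ v ∈ U, v.1 ≠ i := fun v hv hvi => hi (mem_image.2 ⟨v, hv, hvi⟩)
  let φ : α × U → Sym2 (ι × α) := fun p => s((i, p.1), p.2)
  have hφ : Function.Injective φ := by
    rintro ⟨t, u⟩ ⟨t', u'⟩ h
    rcases Sym2.eq_iff.1 h with ⟨htt', huu'⟩ | ⟨hiu', -⟩
    · simp_all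
    · exact absurd (congrArg Prod.fst hiu').symm (hiU _ u'.2)
  -- the vertex `(i, t)` is a witness as soon as its edges to `U` follow the pattern `g`
  let g : U → Bool := fun u => decide (u.1 ∈ S)
  have hpat : ∀ ω : Sym2 (ι × α) → Bool,
      (∀ z, ¬IsExtensionWitness (partiteGraph ω) S T z) →
      ∀ t, (fun u => ω (φ (t, u))) ≠ g := by
    intro ω hω t ht
    have hedge : ∀ (u) (hu : u ∈ U), ω s((i, t), u) = decide (u ∈ S) :=
      fun u hu => congrFun ht ⟨u, hu⟩
    refine hω (i, t) ⟨fun hS => hiU _ (mem_union_left _ hS) rfl,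
      fun hT => hiU _ (mem_union_right _ hT) rfl, fun x hx => ?_, fun y hy hadj => ?_⟩
    · exact ⟨(hiU x (mem_union_left _ hx)).symm,
        by simpa [hx] using hedge x (mem_union_left _ hx)⟩
    · have := hedge y (mem_union_right _ hy)
      simp [hadj.2, disjoint_right.1 hST hy] at this
  calc _ ≤ (#{ω : Sym2 (ι × α) → Bool | ∀ t, (fun u => ω (φ (t, u))) ≠ g} : ℝ) := by
        exact_mod_cast card_le_card (monotone_filter_right _ fun ω _ => hpat ω)
    _ ≤ _ := card_filter_forall_ne_le hφ g
    _ = _ := by rw [card_coe, hU]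

theorem exists_hasExtensionProperty_partiteGraph_of_lt {k m : ℕ} (hk : 0 < k) (hm : 0 < m)
    (h : ((k * (k * m) ^ (k - 1)) ^ 2 : ℝ) * (1 - 2⁻¹ ^ (k - 1)) ^ m < 1) :
    ∃ ω : Sym2 (Fin k × Fin m) → Bool, HasExtensionProperty (partiteGraph ω) k := by
  classical
  have : Nonempty (Fin k × Fin m) := ⟨(⟨0, hk⟩, ⟨0, hm⟩)⟩
  have hq : ∀ q : ℕ, 0 ≤ (1 : ℝ) - 2⁻¹ ^ q :=
    fun q => sub_nonneg.2 (pow_le_one₀ (by norm_num) (by norm_num))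
  set N := card (Sym2 (Fin k × Fin m))
  let small : Finset (Finset (Fin k × Fin m)) := {s | #s < k}
  let P := (small ×ˢ small).filter fun p => Disjoint p.1 p.2 ∧ #p.1 + #p.2 < k
  let bad (p : Finset (Fin k × Fin m) × Finset (Fin k × Fin m)) :
      Finset (Sym2 (Fin k × Fin m) → Bool) :=
    {ω | ∀ z, ¬IsExtensionWitness (partiteGraph ω) p.1 p.2 z}
  have hbad : ∀ p ∈ P, (#(bad p) : ℝ) ≤ 2 ^ N * (1 - 2⁻¹ ^ (k - 1)) ^ m := by
    intro p hp
    obtain ⟨-, hdisj, hcard⟩ := mem_filter.1 hp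
    refine (card_filter_forall_not_isExtensionWitness_le hdisj (by simpa using hcard)).trans ?_
    rw [Fintype.card_fin]
    gcongr 2 ^ N * ?_ ^ m
    · exact hq _
    · exact sub_le_sub_left (pow_le_pow_of_le_one (by norm_num) (by norm_num) (by omega)) 1
  have hP : (#P : ℝ) ≤ (k * (k * m) ^ (k - 1)) ^ 2 := by
    have hsmall := card_filter_card_lt_le (α := Fin k × Fin m) k
    rw [card_prod, Fintype.card_fin, Fintype.card_fin] at hsmall
    calc (#P : ℝ) ≤ #(small ×ˢ small) := by exact_mod_cast card_filter_le _ _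
      _ = (#small : ℝ) ^ 2 := by rw [card_product, sq, Nat.cast_mul]
      _ ≤ _ := by gcongr; exact_mod_cast hsmall
  have hsum : ∑ p ∈ P, (#(bad p) : ℝ) < 2 ^ N := calc
    _ ≤ ∑ _p ∈ P, (2 ^ N * (1 - 2⁻¹ ^ (k - 1)) ^ m : ℝ) := sum_le_sum hbad
    _ = #P * (2 ^ N * (1 - 2⁻¹ ^ (k - 1)) ^ m) := by rw [sum_const, nsmul_eq_mul]
    _ ≤ (k * (k * m) ^ (k - 1)) ^ 2 * (2 ^ N * (1 - 2⁻¹ ^ (k - 1)) ^ m) := by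
      gcongr
      exact mul_nonneg (by positivity) (pow_nonneg (hq _) m)
    _ < 2 ^ N := by nlinarith [pow_pos (two_pos (α := ℝ)) N]
  obtain ⟨ω, hω⟩ := exists_forall_notMem_of_sum_card_lt P bad (by
    rw [card_fun, card_bool]; exact_mod_cast hsum)
  refine ⟨ω, fun X Y hXY hcard => ?_⟩
  by_contra hX
  refine hω (X, Y) (mem_filter.2 ⟨mem_product.2 ⟨?_, ?_⟩, hXY, hcard⟩)
    (mem_filter.2 ⟨mem_univ _, fun z hz => hX ⟨z, hz⟩⟩)
  · exact mem_filter.2 ⟨mem_univ _, show #X < k by omega⟩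
  · exact mem_filter.2 ⟨mem_univ _, show #Y < k by omega⟩

theorem exists_partiteGraph_hasExtensionProperty {k : ℕ} (hk : 0 < k) :
    ∃ (m : ℕ) (ω : Sym2 (Fin k × Fin m) → Bool),
      HasExtensionProperty (partiteGraph ω) k := by
  obtain ⟨m, hm, hmr⟩ := exists_mul_pow_mul_pow_lt_one ((k : ℝ) ^ 2 * k ^ (2 * (k - 1)))
    (2 * (k - 1)) (sub_nonneg.2 (pow_le_one₀ (by norm_num) (by norm_num)))
    (sub_lt_self 1 (by positivity : (0 : ℝ) < 2⁻¹ ^ (k - 1)))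
  exact ⟨m, exists_hasExtensionProperty_partiteGraph_of_lt hk hm (by convert hmr using 2; ring)⟩

theorem extension_index_ge_chromatic_number_general
    {V : Type} (F : SimpleGraph V)
    (c : ℕ) (hc : F.chromaticNumber = c) (h2 : 2 ≤ c) :
    ∃ (n : ℕ) (H : SimpleGraph (Fin n)),
      HasExtensionProperty H (c - 1) ∧ IsEmpty (F ↪g H) := by
  obtain ⟨m, ω, hω⟩ := exists_partiteGraph_hasExtensionProperty (k := c - 1) (by omega)
  let e : Fin ((c - 1) * m) ≃ Fin (c - 1) × Fin m := finProdFinEquiv.symm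
  refine ⟨_, (partiteGraph ω).comap e, hω.of_iso (Iso.comap e _).symm, ⟨fun f => ?_⟩⟩
  have hcol : F.Colorable (c - 1) := by
    simpa using (partiteGraph.coloring ω).colorable.of_hom ((Iso.comap e _).toHom.comp f.toHom)
  have := hc ▸ hcol.chromaticNumber_le
  norm_cast at this
  omega

/-- The extension index of `F` is at least its chromatic number: there is a graph `H`
with the `(χ(F) - 1)`-extension property containing no induced copy of `F`. -/
theorem extension_index_ge_chromatic_number
    {V : Type} [Fintype V] (F : SimpleGraph V)
    (c : ℕ) (hc : F.chromaticNumber = c) (h2 : 2 ≤ c) :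
    ∃ (n : ℕ) (H : SimpleGraph (Fin n)),
      HasExtensionProperty H (c - 1) ∧ IsEmpty (F ↪g H) :=
  extension_index_ge_chromatic_number_general F c hc h2
end

section
/- Every finite simple graph with the 3-extension property contains an induced copy of the path P₄ on 4 vertices; moreover, the cycle C₄ on 4 vertices has the 2-extension property and contains no induced copy of P₄. (Hence the extension index of P₄ equals 3.) -/
/-!
A finite `P₄`-free graph on at least two vertices is disconnected or has a disconnected
complement (Seinsche). By induction on the vertices: a new vertex `v` joins one side of the
old separation if it has no neighbour on the other side, is separated from the rest in the
complement if it is adjacent to everything, and otherwise splits the vertices into its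
neighbours and its non-neighbours, between which an edge would create an induced `P₄`.
As `P₄` is self-complementary, the same argument applies in the complement.

The 3-extension property rules out both kinds of separation, since any two vertices have a
common neighbour and a common non-neighbour. Conversely `C₄` has the 2-extension property,
and its two nonadjacent vertices always have a common neighbour, unlike the ends of `P₄`.
-/

open Finset

namespace SimpleGraph

variable {V : Type} {G H : SimpleGraph V}

lemma pathGraph_four_isIndContained_of_adj {a b c d : V} (hab : G.Adj a b) (hbc : G.Adj b c)
    (hcd : G.Adj c d) (hac : ¬ G.Adj a c) (had : ¬ G.Adj a d) (hbd : ¬ G.Adj b d) :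
    pathGraph 4 ⊴ G := by
  have hac' : a ≠ c := by rintro rfl; exact had hcd
  have had' : a ≠ d := by rintro rfl; exact hac hcd.symm
  have hbd' : b ≠ d := by rintro rfl; exact had hab
  refine ⟨⟨⟨![a, b, c, d], fun i j hij => ?_⟩, fun {i j} => ?_⟩⟩
  · fin_cases i <;> fin_cases j <;> simp_all [hab.ne, hbc.ne, hcd.ne, Ne.symm]
  · change G.Adj (![a, b, c, d] i) (![a, b, c, d] j) ↔ _
    fin_cases i <;> fin_cases j <;>
      simp [pathGraph_adj, hab, hbc, hcd, hab.symm, hbc.symm, hcd.symm, hac, had, hbd,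
        G.adj_comm c a, G.adj_comm d a, G.adj_comm d b]

/-- `0 - 1 - 2 - 3` is sent to `1 - 3 - 0 - 2`, a path in the complement. -/
def pathGraphFourIsoCompl : pathGraph 4 ≃g (pathGraph 4)ᶜ :=
  ⟨⟨![1, 3, 0, 2], ![2, 0, 3, 1], by decide, by decide⟩, by
    simp only [compl_adj, pathGraph_adj]; decide⟩

lemma pathGraph_four_isIndContained_of_compl (h : pathGraph 4 ⊴ Gᶜ) :
    pathGraph 4 ⊴ G := by
  have hc : (pathGraph 4)ᶜ ⊴ G := by
    simpa using compl_isIndContained_compl.mpr h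
  exact IsIndContained.trans ⟨pathGraphFourIsoCompl.toEmbedding⟩ hc

lemma not_pathGraph_four_isIndContained_cycleGraph_four : ¬ pathGraph 4 ⊴ cycleGraph 4 := by
  rintro ⟨f⟩
  have hC4 : ∀ u v : Fin 4, u ≠ v → ¬ (cycleGraph 4).Adj u v →
      ∃ w, (cycleGraph 4).Adj w u ∧ (cycleGraph 4).Adj w v := by decide
  have hP4 : ¬ ∃ k, (pathGraph 4).Adj k 0 ∧ (pathGraph 4).Adj k 3 := by
    simp only [pathGraph_adj]; decide
  obtain ⟨w, hw0, hw3⟩ := hC4 (f 0) (f 3) (f.injective.ne (by decide))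
    (f.map_adj_iff.not.mpr (by simp [pathGraph_adj]))
  obtain ⟨k, rfl⟩ := Finite.surjective_of_injective f.injective w
  exact hP4 ⟨k, f.map_adj_iff.mp hw0, f.map_adj_iff.mp hw3⟩

variable [DecidableEq V]

/-- `A` witnesses that `H.induce s` is disconnected. -/
def IsSeparation (H : SimpleGraph V) (s A : Finset V) : Prop :=
  A ⊆ s ∧ A.Nonempty ∧ (s \ A).Nonempty ∧ ∀ a ∈ A, ∀ b ∈ s \ A, ¬ H.Adj a b

variable {s A : Finset V} {v : V}

lemma IsSeparation.sdiff (hA : IsSeparation H s A) : IsSeparation H s (s \ A) := by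
  obtain ⟨hAs, hA, hB, hAB⟩ := hA
  refine ⟨sdiff_subset, hB, by rwa [Finset.sdiff_sdiff_eq_self hAs], fun b hb a ha h => ?_⟩
  rw [Finset.sdiff_sdiff_eq_self hAs] at ha
  exact hAB a ha b hb h.symm

lemma IsSeparation.insert_of_forall_not_adj (hA : IsSeparation H s A) (hv : v ∉ s)
    (hvA : ∀ a ∈ A, ¬ H.Adj v a) : IsSeparation H (insert v s) A := by
  obtain ⟨hAs, hA, -, hAB⟩ := hA
  refine ⟨hAs.trans (subset_insert _ _), hA, ⟨v, ?_⟩, fun a ha b hb => ?_⟩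
  · simpa using fun hvA => hv (hAs hvA)
  · rw [insert_sdiff_of_notMem _ (fun hvA => hv (hAs hvA)), mem_insert] at hb
    rcases hb with rfl | hb
    exacts [fun h => hvA a ha h.symm, hAB a ha b hb]

lemma isSeparation_compl_singleton_insert (hv : v ∉ s) (hs : s.Nonempty)
    (hvs : ∀ x ∈ s, H.Adj v x) : IsSeparation Hᶜ (insert v s) {v} := by
  have hsdiff : insert v s \ {v} = s := by
    rw [insert_sdiff_of_mem _ (mem_singleton_self v), sdiff_singleton_eq_erase,
      erase_eq_of_notMem hv]
  refine ⟨by simp, singleton_nonempty v, by rwa [hsdiff], fun a ha b hb => ?_⟩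
  rw [mem_singleton.mp ha, compl_adj, not_and, not_not]
  exact fun _ => hvs b (hsdiff ▸ hb)

/-- An edge from a non-neighbour `x` to a neighbour `y` of `v` would complete an induced `P₄`
together with `v` and a neighbour of `v` on the side of the separation not containing `x`. -/
lemma IsSeparation.not_adj_of_not_adj_of_adj (hH : ¬ pathGraph 4 ⊴ H)
    (hA : IsSeparation H s A) {a b x y : V} (ha : a ∈ A) (hva : H.Adj v a) (hb : b ∈ s \ A)
    (hvb : H.Adj v b) (hx : x ∈ s) (hy : y ∈ s) (hvx : ¬ H.Adj v x) (hvy : H.Adj v y) :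
    ¬ H.Adj x y := by
  obtain ⟨-, -, -, hAB⟩ := hA
  intro hxy
  by_cases hxA : x ∈ A <;> by_cases hyA : y ∈ A
  · exact hH (pathGraph_four_isIndContained_of_adj hxy hvy.symm hvb
      (fun h => hvx h.symm) (hAB x hxA b hb) (hAB y hyA b hb))
  · exact hAB x hxA y (mem_sdiff.mpr ⟨hy, hyA⟩) hxy
  · exact hAB y hyA x (mem_sdiff.mpr ⟨hx, hxA⟩) hxy.symm
  · exact hH (pathGraph_four_isIndContained_of_adj hxy hvy.symm hva (fun h => hvx h.symm)
      (fun h => hAB a ha x (mem_sdiff.mpr ⟨hx, hxA⟩) h.symm)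
      (fun h => hAB a ha y (mem_sdiff.mpr ⟨hy, hyA⟩) h.symm))

lemma IsSeparation.insert (hH : ¬ pathGraph 4 ⊴ H) (hA : IsSeparation H s A) (hv : v ∉ s) :
    ∃ A', IsSeparation H (insert v s) A' ∨ IsSeparation Hᶜ (insert v s) A' := by
  classical
  by_cases hvA : ∀ a ∈ A, ¬ H.Adj v a
  · exact ⟨A, .inl (hA.insert_of_forall_not_adj hv hvA)⟩
  by_cases hvB : ∀ b ∈ s \ A, ¬ H.Adj v b
  · exact ⟨s \ A, .inl (hA.sdiff.insert_of_forall_not_adj hv hvB)⟩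
  by_cases hvs : ∀ x ∈ s, H.Adj v x
  · exact ⟨{v}, .inr (isSeparation_compl_singleton_insert hv (hA.2.1.mono hA.1) hvs)⟩
  push Not at hvA hvB hvs
  obtain ⟨a, ha, hva⟩ := hvA
  obtain ⟨b, hb, hvb⟩ := hvB
  obtain ⟨x₀, hx₀, hvx₀⟩ := hvs
  refine ⟨s.filter (¬ H.Adj v ·),
    .inl ⟨fun x hx => ?_, ⟨x₀, ?_⟩, ⟨v, ?_⟩, fun x hx y hy => ?_⟩⟩
  · exact mem_insert_of_mem (mem_filter.mp hx).1
  · exact mem_filter.mpr ⟨hx₀, hvx₀⟩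
  · simp [hv]
  · obtain ⟨hxs, hvx⟩ := mem_filter.mp hx
    simp only [mem_sdiff, mem_insert, mem_filter, not_and, not_not] at hy
    obtain ⟨rfl | hys, hvy⟩ := hy
    · exact fun h => hvx h.symm
    · exact hA.not_adj_of_not_adj_of_adj hH ha hva hb hvb hxs hys hvx (hvy hys)

theorem exists_isSeparation_of_not_pathGraph_four_isIndContained (hG : ¬ pathGraph 4 ⊴ G)
    (s : Finset V) (hs : 2 ≤ #s) : ∃ A, IsSeparation G s A ∨ IsSeparation Gᶜ s A := by
  have hGc : ¬ pathGraph 4 ⊴ Gᶜ := hG ∘ pathGraph_four_isIndContained_of_compl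
  induction s using Finset.induction_on with
  | empty => simp at hs
  | insert v s hv ih =>
    rw [card_insert_of_notMem hv] at hs
    rcases le_or_gt 2 #s with h2 | h1
    · obtain ⟨A, hA | hA⟩ := ih h2
      · exact hA.insert hG hv
      · obtain ⟨A', h | h⟩ := hA.insert hGc hv
        exacts [⟨A', .inr h⟩, ⟨A', .inl (compl_compl G ▸ h)⟩]
    · obtain ⟨u, rfl⟩ := card_eq_one.mp (by omega : #s = 1)
      have hvu : v ≠ u := by simpa using hv
      by_cases h : G.Adj v u
      · exact ⟨{v}, .inr (isSeparation_compl_singleton_insert hv (singleton_nonempty u)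
          (by simpa))⟩
      · have hcompl : ∀ x ∈ ({u} : Finset V), Gᶜ.Adj v x := by simpa [hvu]
        exact ⟨{v}, .inl (compl_compl G ▸
          isSeparation_compl_singleton_insert hv (singleton_nonempty u) hcompl)⟩

lemma not_isSeparation_univ [Fintype V] (hH : ∀ a b, ∃ z, H.Adj z a ∧ H.Adj z b)
    (A : Finset V) : ¬ IsSeparation H univ A := by
  rintro ⟨-, ⟨a, ha⟩, ⟨b, hb⟩, hAB⟩
  obtain ⟨z, hza, hzb⟩ := hH a b
  by_cases hz : z ∈ A
  · exact hAB z hz b hb hzb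
  · exact hAB a ha z (by simpa using hz) hza.symm

end SimpleGraph

open SimpleGraph

variable {V : Type} {G : SimpleGraph V}

lemma HasExtensionProperty.exists_common_adj (h : HasExtensionProperty G 3) (a b : V) :
    ∃ z, G.Adj z a ∧ G.Adj z b := by
  classical
  obtain ⟨z, -, -, hz, -⟩ := h {a, b} ∅ (disjoint_empty_right _)
    (by simpa using card_le_two.trans_lt (by norm_num))
  exact ⟨z, hz a (by simp), hz b (by simp)⟩

lemma HasExtensionProperty.exists_common_compl_adj (h : HasExtensionProperty G 3) (a b : V) :
    ∃ z, Gᶜ.Adj z a ∧ Gᶜ.Adj z b := by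
  classical
  obtain ⟨z, -, hzab, -, hz⟩ := h ∅ {a, b} (disjoint_empty_left _)
    (by simpa using card_le_two.trans_lt (by norm_num))
  simp only [mem_insert, mem_singleton, not_or] at hzab
  exact ⟨z, ⟨hzab.1, hz a (by simp)⟩, ⟨hzab.2, hz b (by simp)⟩⟩

lemma cycleGraph_four_hasExtensionProperty_two : HasExtensionProperty (cycleGraph 4) 2 := by
  unfold HasExtensionProperty; decide

/-- The extension index of `P₄` equals 3: every finite graph with the 3-extension
property contains an induced `P₄`, whereas `C₄` has the 2-extension property and
contains no induced `P₄`. -/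
theorem extension_index_p4_eq_three :
    (∀ (V : Type) [Fintype V] (G : SimpleGraph V),
      HasExtensionProperty G 3 → Nonempty (SimpleGraph.pathGraph 4 ↪g G)) ∧
    HasExtensionProperty (SimpleGraph.cycleGraph 4) 2 ∧
    IsEmpty (SimpleGraph.pathGraph 4 ↪g SimpleGraph.cycleGraph 4) := by
  refine ⟨fun V _ G hG => ?_, cycleGraph_four_hasExtensionProperty_two,
    ⟨fun f => not_pathGraph_four_isIndContained_cycleGraph_four ⟨f⟩⟩⟩
  classical
  by_contra hP4
  obtain ⟨z₀, -⟩ := hG ∅ ∅ (disjoint_empty_left _) (by simp)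
  obtain ⟨z, hz, -⟩ := hG.exists_common_adj z₀ z₀
  obtain ⟨A, hA | hA⟩ := exists_isSeparation_of_not_pathGraph_four_isIndContained hP4 univ
    (one_lt_card.mpr ⟨z, mem_univ _, z₀, mem_univ _, hz.ne⟩)
  exacts [not_isSeparation_univ hG.exists_common_adj A hA,
    not_isSeparation_univ hG.exists_common_compl_adj A hA]
end
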